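/- In a legitimate state of the delay/relay protocol, every token moves to its clockwise successor in each round: if process i has qᵢ = 1 at legitimate state σ, then after one round process i+1 has q_{i+1} = 1 and r_{i+1} = 0. -/

import Mathlib

/-- Global state of the delay/relay ring protocol. -/
structure St (n : ℕ) where
  r : ZMod n → ℕ
  q : ZMod n → ℕ
  c : ZMod n → ℕ

/-- Release condition of process `i`: a delay process (member of `D`) releases
when its counter is `0` and it has a token; a relay process releases whenever
it has a token (counting the token arriving from the predecessor). -/
def rel {n : ℕ} (D : Finset (ZMod n)) (σ : St n) (i : ZMod n) : Prop :=
  if i ∈ D then σ.c i = 0 ∧ 0 < σ.r i + σ.q (i - 1)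
  else 0 < σ.r i + σ.q (i - 1)

instance {n : ℕ} (D : Finset (ZMod n)) (σ : St n) (i : ZMod n) :
    Decidable (rel D σ i) := by unfold rel; infer_instance

/-- One synchronous global round of the delay/relay protocol: every process
absorbs the predecessor's queued token, the predecessor's queue is zeroed,
and a process enqueues (at most) one token when its release condition holds;
a delay process resets its counter to `C` upon release and otherwise
decrements it when positive. -/
def roundFn {n : ℕ} (D : Finset (ZMod n)) (C : ℕ) (σ : St n) : St n where
  r := fun i => σ.r i + σ.q (i - 1) - (if rel D σ i then 1 else 0)
  q := fun i => if rel D σ i then 1 else 0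
  c := fun i => if i ∈ D then (if rel D σ i then C else σ.c i - 1) else σ.c i

/-- Process `i` holds a token. -/
def tok {n : ℕ} (σ : St n) (i : ZMod n) : Prop := 0 < σ.r i + σ.q i

/-- Minimum clockwise distance from `i` to a process holding a token. -/
noncomputable def Rdist {n : ℕ} (σ : St n) (i : ZMod n) : ℕ :=
  sInf {d : ℕ | tok σ (i + (d : ZMod n))}

/-- Minimum counterclockwise distance from `i` to a process holding a token. -/
noncomputable def Ldist {n : ℕ} (σ : St n) (i : ZMod n) : ℕ :=
  sInf {d : ℕ | tok σ (i - (d : ZMod n))}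

/-- Minimum positive clockwise distance between token-holding processes. -/
noncomputable def tokdist {n : ℕ} (σ : St n) : ℕ :=
  sInf {d : ℕ | 0 < d ∧ ∃ i : ZMod n, tok σ i ∧ tok σ (i + (d : ZMod n))}

/-- Legitimate state: all `m` tokens are queued (none resting), queues are
`0/1`-valued, pairwise clockwise token distances exceed `C`, and the counter
of each delay process records the clockwise distance of the nearest
approaching token. -/
noncomputable def Legit {n : ℕ} [NeZero n] (D : Finset (ZMod n)) (C m : ℕ) (σ : St n) : Prop :=
  (∑ i : ZMod n, σ.q i) = m ∧ (∑ i : ZMod n, σ.r i) = 0 ∧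
  (∀ i : ZMod n, σ.q i ≤ 1) ∧
  C < tokdist σ ∧
  (∀ i ∈ D, 0 < σ.c i → σ.q i = 0 → Rdist σ i = C - σ.c i) ∧
  (∀ i ∈ D, σ.q i = 0 → σ.c i < Ldist σ i) ∧
  (∀ i ∈ D, σ.q i = 1 → σ.c i = C)

/-! A token queued at `i` arrives at `i + 1` in one round. A delay process at `i + 1` is then
ready: if it holds no token its counter is below `Ldist = 1`, and if it holds one the two adjacent
tokens force `C < tokdist ≤ 1`, so its counter `C` is `0`. -/

theorem Ldist_le_of_tok {n : ℕ} {σ : St n} {i : ZMod n} {d : ℕ} (h : tok σ (i - d)) :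
    Ldist σ i ≤ d :=
  Nat.sInf_le h

theorem tokdist_le_of_tok {n : ℕ} {σ : St n} {i : ZMod n} {d : ℕ} (hd : 0 < d)
    (hi : tok σ i) (hid : tok σ (i + d)) : tokdist σ ≤ d :=
  Nat.sInf_le ⟨hd, i, hi, hid⟩

namespace Legit

variable {n C m : ℕ} [NeZero n] {D : Finset (ZMod n)} {σ : St n}

theorem r_eq_zero (hσ : Legit D C m σ) (j : ZMod n) : σ.r j = 0 :=
  Finset.sum_eq_zero_iff.mp hσ.2.1 j (Finset.mem_univ j)

theorem tok_iff (hσ : Legit D C m σ) (j : ZMod n) : tok σ j ↔ 0 < σ.q j := by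
  rw [tok, hσ.r_eq_zero, zero_add]

theorem c_succ_eq_zero (hσ : Legit D C m σ) {i : ZMod n} (hi : σ.q i = 1) (hD : i + 1 ∈ D) :
    σ.c (i + 1) = 0 := by
  have htok_i : tok σ i := (hσ.tok_iff i).mpr (by omega)
  have htok_succ : σ.q (i + 1) = 1 → tok σ (i + 1) := fun h ↦ (hσ.tok_iff _).mpr (by omega)
  obtain ⟨-, -, hq1, htd, -, hL, hC⟩ := hσ
  rcases Nat.le_one_iff_eq_zero_or_eq_one.mp (hq1 (i + 1)) with h0 | h1
  · have hLd : Ldist σ (i + 1) ≤ 1 := Ldist_le_of_tok (by simpa using htok_i)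
    have := hL (i + 1) hD h0
    omega
  · have htd1 : tokdist σ ≤ 1 :=
      tokdist_le_of_tok one_pos htok_i (by simpa using htok_succ h1)
    have := hC (i + 1) hD h1
    omega

theorem rel_succ (hσ : Legit D C m σ) {i : ZMod n} (hi : σ.q i = 1) : rel D σ (i + 1) := by
  have hpos : 0 < σ.r (i + 1) + σ.q (i + 1 - 1) := by simp [hi]
  unfold rel
  split_ifs with hD
  · exact ⟨hσ.c_succ_eq_zero hi hD, hpos⟩
  · exact hpos

end Legit

theorem stmt_8_general (n m C : ℕ) [NeZero n] (D : Finset (ZMod n)) (σ : St n)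
    (hσ : Legit D C m σ) (i : ZMod n) (hi : σ.q i = 1) :
    (roundFn D C σ).q (i + 1) = 1 ∧ (roundFn D C σ).r (i + 1) = 0 := by
  have hrel := hσ.rel_succ hi
  refine ⟨by simp [roundFn, hrel], ?_⟩
  simp [roundFn, hrel, hσ.r_eq_zero, hi]

/-- In a legitimate state every token moves to its clockwise successor in one
round: if `qᵢ = 1` then after the round `q_{i+1} = 1` and `r_{i+1} = 0`. -/
theorem stmt_8 (n m C : ℕ) [NeZero n] (D : Finset (ZMod n))
    (hm : 1 ≤ m) (hsep : m * (C + 1) ≤ n) (σ : St n)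
    (hσ : Legit D C m σ) (i : ZMod n) (hi : σ.q i = 1) :
    (roundFn D C σ).q (i + 1) = 1 ∧ (roundFn D C σ).r (i + 1) = 0 :=
  stmt_8_general n m C D σ hσ i hi
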